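/- arXiv:1512.09286 — 2 statements merged into one kernel-verified Lean document; each statement's English description precedes it below -/
import Mathlib

section
/- Fix an integer n₀ ≥ 2 and let m = n₀(n₀+1). Every connected subset A of ℤ² with exactly m points is either (a translate of) an n₀ × (n₀+1) rectangle or has perimeter P(A) ≥ 4(n₀+1). -/
/-- The four nearest neighbors of a site of `ℤ²` (Euclidean distance 1). -/
def nbrs (x : ℤ × ℤ) : Finset (ℤ × ℤ) :=
  {(x.1 + 1, x.2), (x.1 - 1, x.2), (x.1, x.2 + 1), (x.1, x.2 - 1)}

/-- The (edge) perimeter of a finite subset `A` of `ℤ²`. -/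
def perim (A : Finset (ℤ × ℤ)) : ℕ :=
  ∑ x ∈ A, ((nbrs x).filter (fun y => y ∉ A)).card

/-- `A ⊂ ℤ²` is connected with respect to nearest-neighbor adjacency. -/
def Conn (A : Finset (ℤ × ℤ)) : Prop :=
  ∀ x ∈ A, ∀ y ∈ A, Relation.ReflTransGen (fun u v => u ∈ A ∧ v ∈ A ∧ v ∈ nbrs u) x y

/-- `A` is a translate of a `p × q` rectangle in `ℤ²`. -/
def IsRectT (A : Finset (ℤ × ℤ)) (p q : ℕ) : Prop :=
  ∃ x0 y0 : ℤ, A = Finset.Ico x0 (x0 + (p : ℤ)) ×ˢ Finset.Ico y0 (y0 + (q : ℤ))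

lemma nbrs_filter_card (A : Finset (ℤ × ℤ)) (x : ℤ × ℤ) :
    ((nbrs x).filter (fun y => y ∉ A)).card =
      ((if (x.1+1,x.2) ∈ A then 0 else 1) + (if (x.1-1,x.2) ∈ A then 0 else 1)) +
      ((if (x.1,x.2+1) ∈ A then 0 else 1) + (if (x.1,x.2-1) ∈ A then 0 else 1)) := by
  rw [Finset.card_filter, nbrs]
  rw [Finset.sum_insert (by simp [Prod.ext_iff]; try omega),
      Finset.sum_insert (by simp [Prod.ext_iff]; try omega),
      Finset.sum_insert (by simp [Prod.ext_iff]; try omega),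
      Finset.sum_singleton]
  split_ifs <;> simp_all

lemma col_bound (A : Finset (ℤ × ℤ)) (ε : ℤ) (hε : ε = 1 ∨ ε = -1) :
    (A.image Prod.fst).card ≤ (A.filter (fun x => (x.1, x.2 + ε) ∉ A)).card := by
  have hsub : A.image Prod.fst ⊆
      (A.filter (fun x => (x.1, x.2 + ε) ∉ A)).image Prod.fst := by
    intro c hc
    simp only [Finset.mem_image] at hc ⊢
    obtain ⟨p, hp, rfl⟩ := hc
    have hne : (A.filter (fun x => x.1 = p.1)).Nonempty := ⟨p, by simp [hp]⟩
    obtain ⟨q, hq, hmax⟩ := Finset.exists_max_image (A.filter (fun x => x.1 = p.1))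
      (fun x => ε * x.2) hne
    simp only [Finset.mem_filter] at hq
    refine ⟨q, Finset.mem_filter.mpr ⟨hq.1, ?_⟩, hq.2⟩
    intro hmem
    have := hmax (q.1, q.2 + ε) (Finset.mem_filter.mpr ⟨hmem, hq.2⟩)
    simp only at this
    rcases hε with rfl | rfl <;> nlinarith [this]
  exact le_trans (Finset.card_le_card hsub) Finset.card_image_le

lemma row_bound (A : Finset (ℤ × ℤ)) (ε : ℤ) (hε : ε = 1 ∨ ε = -1) :
    (A.image Prod.snd).card ≤ (A.filter (fun x => (x.1 + ε, x.2) ∉ A)).card := by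
  have hsub : A.image Prod.snd ⊆
      (A.filter (fun x => (x.1 + ε, x.2) ∉ A)).image Prod.snd := by
    intro c hc
    simp only [Finset.mem_image] at hc ⊢
    obtain ⟨p, hp, rfl⟩ := hc
    have hne : (A.filter (fun x => x.2 = p.2)).Nonempty := ⟨p, by simp [hp]⟩
    obtain ⟨q, hq, hmax⟩ := Finset.exists_max_image (A.filter (fun x => x.2 = p.2))
      (fun x => ε * x.1) hne
    simp only [Finset.mem_filter] at hq
    refine ⟨q, Finset.mem_filter.mpr ⟨hq.1, ?_⟩, hq.2⟩
    intro hmem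
    have := hmax (q.1 + ε, q.2) (Finset.mem_filter.mpr ⟨hmem, hq.2⟩)
    simp only at this
    rcases hε with rfl | rfl <;> nlinarith [this]
  exact le_trans (Finset.card_le_card hsub) Finset.card_image_le

lemma sum_ind (A : Finset (ℤ × ℤ)) (g : ℤ × ℤ → ℤ × ℤ) :
    (∑ x ∈ A, if g x ∈ A then 0 else 1) = (A.filter (fun x => g x ∉ A)).card := by
  rw [Finset.card_filter]
  exact Finset.sum_congr rfl (fun x _ => by by_cases h : g x ∈ A <;> simp [h])

lemma perim_lb (A : Finset (ℤ × ℤ)) :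
    2 * (A.image Prod.fst).card + 2 * (A.image Prod.snd).card ≤ perim A := by
  have h : perim A =
      ((A.filter (fun x => (x.1 + 1, x.2) ∉ A)).card
        + (A.filter (fun x => (x.1 - 1, x.2) ∉ A)).card)
      + ((A.filter (fun x => (x.1, x.2 + 1) ∉ A)).card
        + (A.filter (fun x => (x.1, x.2 - 1) ∉ A)).card) := by
    unfold perim
    rw [Finset.sum_congr rfl (fun x _ => nbrs_filter_card A x)]
    rw [Finset.sum_add_distrib, Finset.sum_add_distrib, Finset.sum_add_distrib]
    rw [sum_ind A (fun x => (x.1 + 1, x.2)), sum_ind A (fun x => (x.1 - 1, x.2)),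
        sum_ind A (fun x => (x.1, x.2 + 1)), sum_ind A (fun x => (x.1, x.2 - 1))]
  rw [h]
  have h1 := row_bound A 1 (Or.inl rfl)
  have h2 := row_bound A (-1) (Or.inr rfl)
  have h3 := col_bound A 1 (Or.inl rfl)
  have h4 := col_bound A (-1) (Or.inr rfl)
  simp only [← sub_eq_add_neg] at h2 h4
  omega

lemma image_interval (A : Finset (ℤ × ℤ)) (hconn : Conn A) (hA : A.Nonempty)
    (f : ℤ × ℤ → ℤ) (hf : ∀ u v : ℤ × ℤ, v ∈ nbrs u → f u - 1 ≤ f v ∧ f v ≤ f u + 1) :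
    ∃ x0 : ℤ, A.image f = Finset.Ico x0 (x0 + ((A.image f).card : ℤ)) := by
  set S := A.image f with hSdef
  have hS : S.Nonempty := hA.image f
  set m := S.min' hS with hm
  set M := S.max' hS with hM
  have key : ∀ {u v : ℤ × ℤ},
      Relation.ReflTransGen (fun u v => u ∈ A ∧ v ∈ A ∧ v ∈ nbrs u) u v →
      u ∈ A → ∀ z, f u ≤ z → z ≤ f v → ∃ r ∈ A, f r = z := by
    intro u v h
    induction h with
    | refl => intro hu z h1 h2; exact ⟨u, hu, by omega⟩
    | @tail b c _ hstep ih =>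
      intro hu z h1 h2
      obtain ⟨hbA, hcA, hnb⟩ := hstep
      have hd := hf _ _ hnb
      by_cases hz : z ≤ f b
      · exact ih hu z h1 hz
      · exact ⟨c, hcA, by omega⟩
  have hconv : ∀ z, m ≤ z → z ≤ M → z ∈ S := by
    intro z h1 h2
    obtain ⟨p, hp, hfp⟩ := Finset.mem_image.mp (S.min'_mem hS)
    obtain ⟨q, hq, hfq⟩ := Finset.mem_image.mp (S.max'_mem hS)
    obtain ⟨r, hr, hfr⟩ := key (hconn p hp q hq) hp z (by omega) (by omega)
    exact Finset.mem_image.mpr ⟨r, hr, hfr⟩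
  have hMm : m ≤ M := S.min'_le _ (S.max'_mem hS)
  have hcardS : (S.card : ℤ) = M + 1 - m := by
    have hicc : S = Finset.Icc m M := by
      ext z
      simp only [Finset.mem_Icc]
      exact ⟨fun hz => ⟨S.min'_le z hz, S.le_max' z hz⟩, fun ⟨h1, h2⟩ => hconv z h1 h2⟩
    rw [hicc, Int.card_Icc]
    omega
  refine ⟨m, ?_⟩
  ext z
  simp only [Finset.mem_Ico]
  constructor
  · intro hz
    have := S.min'_le z hz
    have := S.le_max' z hz
    omega
  · intro ⟨h1, h2⟩
    exact hconv z h1 (by omega)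

lemma abkey (n a b : ℕ) (hn : 2 ≤ n) (hsum : a + b ≤ 2 * n + 1)
    (hab : n * (n + 1) ≤ a * b) : (a = n ∧ b = n + 1) ∨ (a = n + 1 ∧ b = n) := by
  have ha0 : (0:ℤ) ≤ (a:ℤ) := Int.natCast_nonneg a
  have hb0 : (0:ℤ) ≤ (b:ℤ) := Int.natCast_nonneg b
  have hn2 : (2:ℤ) ≤ (n:ℤ) := by exact_mod_cast hn
  have hsumZ : (a:ℤ) + b ≤ 2 * n + 1 := by exact_mod_cast hsum
  have habZ : (n:ℤ) * (n + 1) ≤ (a:ℤ) * b := by exact_mod_cast hab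
  have hZ : ((a:ℤ) = n ∧ (b:ℤ) = n + 1) ∨ ((a:ℤ) = n + 1 ∧ (b:ℤ) = n) := by
    rcases le_or_gt (a:ℤ) n with h | h
    · have h1 : (n:ℤ) ≤ a := by
        nlinarith [sq_nonneg ((n:ℤ) - a), mul_le_mul_of_nonneg_left hsumZ ha0]
      have h2 : (a:ℤ) = n := le_antisymm h h1
      have h3 : (n:ℤ) + 1 ≤ b := by
        rw [h2] at habZ
        exact le_of_mul_le_mul_left habZ (by linarith)
      left
      exact ⟨h2, le_antisymm (by linarith) h3⟩
    · have hble : (b:ℤ) ≤ n := by linarith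
      have h1 : (n:ℤ) ≤ b := by
        nlinarith [sq_nonneg ((n:ℤ) - b), mul_le_mul_of_nonneg_left hsumZ hb0]
      have h2 : (b:ℤ) = n := le_antisymm hble h1
      have h3 : (n:ℤ) + 1 ≤ a := by linarith
      right
      exact ⟨le_antisymm (by linarith) h3, h2⟩
  rcases hZ with ⟨h1, h2⟩ | ⟨h1, h2⟩
  · left; constructor <;> [exact_mod_cast h1; exact_mod_cast h2]
  · right; constructor <;> [exact_mod_cast h1; exact_mod_cast h2]

/-- A connected subset of `ℤ²` with exactly `n₀(n₀+1)` points is either a translate of an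
`n₀ × (n₀+1)` rectangle (in either orientation) or has perimeter at least `4(n₀+1)`. -/
theorem rect_or_large_perimeter (n₀ : ℕ) (hn₀ : 2 ≤ n₀) (A : Finset (ℤ × ℤ))
    (hcard : A.card = n₀ * (n₀ + 1)) (hconn : Conn A) :
    (IsRectT A n₀ (n₀ + 1) ∨ IsRectT A (n₀ + 1) n₀) ∨ 4 * (n₀ + 1) ≤ perim A := by
  have hA : A.Nonempty := by
    rw [← Finset.card_pos, hcard]; positivity
  set S := A.image Prod.fst with hSdef
  set T := A.image Prod.snd with hTdef
  have hperim : 2 * S.card + 2 * T.card ≤ perim A := perim_lb A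
  by_cases hsum : 2 * n₀ + 2 ≤ S.card + T.card
  · right; omega
  · left
    have hsum' : S.card + T.card ≤ 2 * n₀ + 1 := by omega
    have hsub : A ⊆ S ×ˢ T := by
      intro x hx
      exact Finset.mem_product.mpr ⟨Finset.mem_image_of_mem _ hx, Finset.mem_image_of_mem _ hx⟩
    have hab : n₀ * (n₀ + 1) ≤ S.card * T.card := by
      calc n₀ * (n₀ + 1) = A.card := hcard.symm
        _ ≤ (S ×ˢ T).card := Finset.card_le_card hsub
        _ = S.card * T.card := Finset.card_product S T
    have hrect := abkey n₀ S.card T.card hn₀ hsum' hab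
    have hAeq : A = S ×ˢ T := by
      apply Finset.eq_of_subset_of_card_le hsub
      rw [Finset.card_product, hcard]
      rcases hrect with ⟨h1, h2⟩ | ⟨h1, h2⟩ <;> rw [h1, h2] <;> ring_nf <;> try exact le_refl _
    have hfstf : ∀ u v : ℤ × ℤ, v ∈ nbrs u →
        Prod.fst u - 1 ≤ Prod.fst v ∧ Prod.fst v ≤ Prod.fst u + 1 := by
      intro u v hv
      simp only [nbrs, Finset.mem_insert, Finset.mem_singleton] at hv
      rcases hv with rfl | rfl | rfl | rfl <;> simp <;> omega
    have hsndf : ∀ u v : ℤ × ℤ, v ∈ nbrs u →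
        Prod.snd u - 1 ≤ Prod.snd v ∧ Prod.snd v ≤ Prod.snd u + 1 := by
      intro u v hv
      simp only [nbrs, Finset.mem_insert, Finset.mem_singleton] at hv
      rcases hv with rfl | rfl | rfl | rfl <;> simp <;> omega
    obtain ⟨x0, hx0⟩ := image_interval A hconn hA Prod.fst hfstf
    obtain ⟨y0, hy0⟩ := image_interval A hconn hA Prod.snd hsndf
    rw [← hSdef] at hx0
    rw [← hTdef] at hy0
    rcases hrect with ⟨h1, h2⟩ | ⟨h1, h2⟩
    · left
      refine ⟨x0, y0, ?_⟩
      rw [hAeq, hx0, hy0, h1, h2]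
    · right
      refine ⟨x0, y0, ?_⟩
      rw [hAeq, hx0, hy0, h1, h2]
end

section
/- Let (X_t) be a finite irreducible reversible Markov chain. For states x ≠ b and a subset B containing b with x ∉ B, the mean hitting time satisfies E_x[H_B] = Cap(x,B)⁻¹ · Σ_{y∈E} μ(y) P_y[H_x < H_B], where Cap is the capacity and μ the stationary measure. -/
/-- `u y = P_y[H_A < H_B]`: harmonic characterization of hitting probabilities. -/
def IsHittingProb {E : Type*} [Fintype E] (p : Matrix E E ℝ) (A B : Finset E)
    (u : E → ℝ) : Prop :=
  (∀ x ∈ A, u x = 1) ∧ (∀ x ∈ B, x ∉ A → u x = 0) ∧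
    ∀ x, x ∉ A → x ∉ B → u x = ∑ y, p x y * u y

/-- `m y = E_y[H_B]`, the mean hitting times of `B` for the continuous-time chain with
holding rates `λ` and jump matrix `p`: `m = 0` on `B` and
`m(x) = λ(x)⁻¹ + ∑_y p(x,y) m(y)` off `B`. -/
def IsMeanHitting {E : Type*} [Fintype E] (p : Matrix E E ℝ) (lam : E → ℝ)
    (B : Finset E) (m : E → ℝ) : Prop :=
  (∀ x ∈ B, m x = 0) ∧ ∀ x, x ∉ B → m x = (lam x)⁻¹ + ∑ y, p x y * m y

lemma pow_entry_nonneg {E : Type*} [Fintype E] [DecidableEq E] (p : Matrix E E ℝ)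
    (hnn : ∀ x y, 0 ≤ p x y) : ∀ (n : ℕ) (x y : E), 0 ≤ (p ^ n) x y := by
  intro n
  induction n with
  | zero => intro x y; simp [Matrix.one_apply]; split_ifs <;> norm_num
  | succ n ih =>
      intro x y
      rw [pow_succ, Matrix.mul_apply]
      exact Finset.sum_nonneg fun z _ => mul_nonneg (ih x z) (hnn z y)

lemma harmonic_nonpos {E : Type*} [Fintype E] [DecidableEq E] (p : Matrix E E ℝ)
    (hnn : ∀ x y, 0 ≤ p x y) (hrow : ∀ x, ∑ y, p x y = 1)
    (hirr : ∀ x y : E, ∃ n : ℕ, 0 < (p ^ n) x y)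
    (C : Finset E) (c : E) (hc : c ∈ C) (h : E → ℝ)
    (hC : ∀ y ∈ C, h y ≤ 0)
    (hharm : ∀ y, y ∉ C → h y = ∑ z, p y z * h z) :
    ∀ y, h y ≤ 0 := by
  obtain ⟨y0, -, hy0⟩ := Finset.exists_max_image Finset.univ h ⟨c, Finset.mem_univ c⟩
  have hy0' : ∀ z, h z ≤ h y0 := fun z => hy0 z (Finset.mem_univ z)
  suffices hM : h y0 ≤ 0 by intro y; exact le_trans (hy0' y) hM
  have key : ∀ n : ℕ, ∀ y, h y = h y0 → 0 < (p ^ n) y c → h y0 ≤ 0 := by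
    intro n
    induction n with
    | zero =>
        intro y hy hpos
        simp only [pow_zero, Matrix.one_apply] at hpos
        split_ifs at hpos with hyc
        · exact hy ▸ hyc ▸ hC c hc
        · norm_num at hpos
    | succ n ih =>
        intro y hy hpos
        by_cases hyC : y ∈ C
        · exact hy ▸ hC y hyC
        · have hharmy := hharm y hyC
          have hzero : ∀ z, p y z * (h y0 - h z) = 0 := by
            have hsum0 : ∑ z, p y z * (h y0 - h z) = 0 := by
              have h1 : ∑ z, p y z * h y0 = h y0 := by
                rw [← Finset.sum_mul, hrow, one_mul]
              calc ∑ z, p y z * (h y0 - h z)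
                  = ∑ z, p y z * h y0 - ∑ z, p y z * h z := by
                    rw [← Finset.sum_sub_distrib]; congr 1; ext z; ring
                _ = h y0 - h y := by rw [h1, ← hharmy]
                _ = 0 := by rw [hy]; ring
            intro z
            exact (Finset.sum_eq_zero_iff_of_nonneg
              (fun z _ => mul_nonneg (hnn y z) (by linarith [hy0' z]))).mp hsum0 z
              (Finset.mem_univ z)
          rw [pow_succ', Matrix.mul_apply] at hpos
          obtain ⟨z, -, hz⟩ := Finset.exists_lt_of_sum_lt (by
            simpa using hpos : ∑ z, (0 : ℝ) < ∑ z, p y z * (p ^ n) z c)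
          have hpyz : 0 < p y z ∧ 0 < (p ^ n) z c := by
            rcases mul_pos_iff.mp hz with h' | h'
            · exact h'
            · exact absurd h'.1 (not_lt.mpr (hnn y z))
          have hhz : h z = h y0 := by
            have := hzero z
            have h2 : h y0 - h z = 0 := by
              rcases mul_eq_zero.mp this with h' | h'
              · exact absurd h' (ne_of_gt hpyz.1)
              · exact h'
            linarith
          exact ih z hhz hpyz.2
  obtain ⟨n, hn⟩ := hirr y0 c
  exact key n y0 rfl hn

/-- Mean hitting time formula (BEGK / Beltrán-Landim): for a finite irreducible reversible
continuous-time chain, states `x ≠ b` with `b ∈ B` and `x ∉ B`: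
`E_x[H_B] = Cap(x, B)⁻¹ ∑_{y∈E} μ(y) P_y[H_x < H_B]`, where
`Cap(x, B) = μ(x)λ(x) P_x[H_B < H⁺_x]` and `P_x[H_x < H_B] = 1` by convention. -/
theorem mean_hitting_time_formula {E : Type*} [Fintype E] [DecidableEq E]
    (p : Matrix E E ℝ) (hnn : ∀ x y, 0 ≤ p x y) (hrow : ∀ x, ∑ y, p x y = 1)
    (hirr : ∀ x y : E, ∃ n : ℕ, 0 < (p ^ n) x y)
    (μ lam : E → ℝ) (hμ : ∀ x, 0 < μ x) (hlam : ∀ x, 0 < lam x)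
    (hsum : ∑ z, μ z = 1)
    (hrev : ∀ x y, μ x * lam x * p x y = μ y * lam y * p y x)
    (B : Finset E) (x b : E) (hxb : x ≠ b) (hb : b ∈ B) (hx : x ∉ B)
    (m : E → ℝ) (hm : IsMeanHitting p lam B m)
    (vB φ : E → ℝ)
    (hvB : IsHittingProb p B {x} vB)
    (hφ : IsHittingProb p {x} B φ) :
    m x = (μ x * lam x * ∑ z, p x z * vB z)⁻¹ * ∑ z, μ z * φ z := by
  -- basic facts
  have hφB : ∀ y ∈ B, φ y = 0 := fun y hy =>
    hφ.2.1 y hy (by rw [Finset.mem_singleton]; rintro rfl; exact hx hy)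
  have hφx : φ x = 1 := hφ.1 x (Finset.mem_singleton_self x)
  have hvBx : vB x = 0 := hvB.2.1 x (Finset.mem_singleton_self x) hx
  have hvBB : ∀ y ∈ B, vB y = 1 := hvB.1
  have hφharm : ∀ y, y ≠ x → y ∉ B → φ y = ∑ z, p y z * φ z := fun y hy hyB =>
    hφ.2.2 y (by rw [Finset.mem_singleton]; exact hy) hyB
  have hvharm : ∀ y, y ∉ B → y ≠ x → vB y = ∑ z, p y z * vB z := fun y hyB hy =>
    hvB.2.2 y hyB (by rw [Finset.mem_singleton]; exact hy)
  set C : Finset E := B ∪ {x} with hC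
  have hmemC : ∀ y, y ∈ C ↔ (y ∈ B ∨ y = x) := by
    intro y; simp [hC, Finset.mem_union, Finset.mem_singleton]; exact Or.comm
  -- w := vB + φ - 1 vanishes: φ = 1 - vB
  have hφv : ∀ y, φ y = 1 - vB y := by
    have harm : ∀ (s : ℝ) (y), y ∉ C →
        s * (vB y + φ y - 1) = ∑ z, p y z * (s * (vB z + φ z - 1)) := by
      intro s y hyC
      have hyB : y ∉ B := fun h => hyC ((hmemC y).mpr (Or.inl h))
      have hyx : y ≠ x := fun h => hyC ((hmemC y).mpr (Or.inr h))
      have e1 := hvharm y hyB hyx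
      have e2 := hφharm y hyx hyB
      have expand : ∑ z, p y z * (s * (vB z + φ z - 1))
          = s * (∑ z, p y z * vB z) + s * (∑ z, p y z * φ z) - s * (∑ z, p y z) := by
        rw [Finset.mul_sum, Finset.mul_sum, Finset.mul_sum, ← Finset.sum_add_distrib,
          ← Finset.sum_sub_distrib]
        exact Finset.sum_congr rfl fun z _ => by ring
      rw [expand, hrow, ← e1, ← e2]; ring
    have hzC : ∀ (s : ℝ) (y), y ∈ C → s * (vB y + φ y - 1) ≤ 0 := by
      intro s y hyC
      rcases (hmemC y).mp hyC with h | h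
      · rw [hvBB y h, hφB y h]; ring_nf; simp
      · subst h; rw [hvBx, hφx]; ring_nf; simp
    have h1 := harmonic_nonpos p hnn hrow hirr C b ((hmemC b).mpr (Or.inl hb))
      (fun y => (1 : ℝ) * (vB y + φ y - 1)) (hzC 1) (harm 1)
    have h2 := harmonic_nonpos p hnn hrow hirr C b ((hmemC b).mpr (Or.inl hb))
      (fun y => (-1 : ℝ) * (vB y + φ y - 1)) (hzC (-1)) (harm (-1))
    intro y
    have := h1 y; have := h2 y
    simp only [one_mul, neg_one_mul] at *
    linarith
  -- capacity positivity
  set Cap : ℝ := ∑ z, p x z * vB z with hCapdef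
  have hvnn : ∀ y, 0 ≤ vB y := by
    have := harmonic_nonpos p hnn hrow hirr C b ((hmemC b).mpr (Or.inl hb))
      (fun y => -vB y)
      (by intro y hyC; show -vB y ≤ 0
          rcases (hmemC y).mp hyC with h | h
          · rw [hvBB y h]; norm_num
          · subst h; rw [hvBx]; norm_num)
      (by intro y hyC
          have hyB : y ∉ B := fun h => hyC ((hmemC y).mpr (Or.inl h))
          have hyx : y ≠ x := fun h => hyC ((hmemC y).mpr (Or.inr h))
          have e1 := hvharm y hyB hyx
          show -vB y = ∑ z, p y z * (-vB z)
          rw [e1]; simp [Finset.sum_neg_distrib, mul_neg])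
    intro y; have h' : -vB y ≤ 0 := this y; linarith
  have hCapnn : 0 ≤ Cap :=
    Finset.sum_nonneg fun z _ => mul_nonneg (hnn x z) (hvnn z)
  have hCapne : Cap ≠ 0 := by
    intro h0
    -- then vB is harmonic at x too, so 1 - vB ≤ 0 everywhere off B, contradiction at x
    have := harmonic_nonpos p hnn hrow hirr B b hb (fun y => 1 - vB y)
      (by intro y hy; show 1 - vB y ≤ 0; rw [hvBB y hy]; norm_num)
      (by intro y hyB
          have e : vB y = ∑ z, p y z * vB z := by
            by_cases hyx : y = x
            · subst hyx; rw [hvBx, ← hCapdef, h0]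
            · exact hvharm y hyB hyx
          show 1 - vB y = ∑ z, p y z * (1 - vB z)
          have expand : ∑ z, p y z * (1 - vB z) = ∑ z, p y z - ∑ z, p y z * vB z := by
            rw [← Finset.sum_sub_distrib]; apply Finset.sum_congr rfl
            intro z _; ring
          rw [expand, hrow, ← e])
    have hcontra : 1 - vB x ≤ 0 := this x
    rw [hvBx] at hcontra; norm_num at hcontra
  have hMx : μ x * lam x ≠ 0 := ne_of_gt (mul_pos (hμ x) (hlam x))
  -- summation by parts
  have swap : ∑ y, ∑ z, μ y * lam y * φ y * (p y z * m z)
      = ∑ y, ∑ z, μ y * lam y * m y * (p y z * φ z) := by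
    rw [Finset.sum_comm]
    apply Finset.sum_congr rfl; intro a _
    apply Finset.sum_congr rfl; intro c' _
    linear_combination (φ c' * m a) * hrev c' a
  have keyS : ∑ y, μ y * φ y
      = μ x * lam x * m x * (1 - ∑ z, p x z * φ z) := by
    have stepA : ∑ y, μ y * lam y * φ y * (m y - ∑ z, p y z * m z)
        = ∑ y, μ y * φ y := by
      apply Finset.sum_congr rfl; intro y _
      by_cases hyB : y ∈ B
      · rw [hφB y hyB]; ring
      · have hmy : m y - ∑ z, p y z * m z = (lam y)⁻¹ := by
          rw [hm.2 y hyB]; ring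
        rw [hmy]
        have hl : lam y ≠ 0 := ne_of_gt (hlam y)
        field_simp
    have stepB : ∑ y, μ y * lam y * φ y * (m y - ∑ z, p y z * m z)
        = ∑ y, μ y * lam y * m y * (φ y - ∑ z, p y z * φ z) := by
      have e1 : ∀ y, μ y * lam y * φ y * (m y - ∑ z, p y z * m z)
          = μ y * lam y * φ y * m y - ∑ z, μ y * lam y * φ y * (p y z * m z) := by
        intro y; rw [mul_sub, Finset.mul_sum]
      have e2 : ∀ y, μ y * lam y * m y * (φ y - ∑ z, p y z * φ z)
          = μ y * lam y * m y * φ y - ∑ z, μ y * lam y * m y * (p y z * φ z) := by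
        intro y; rw [mul_sub, Finset.mul_sum]
      simp only [e1, e2, Finset.sum_sub_distrib]
      rw [swap]
      congr 1
      apply Finset.sum_congr rfl; intro y _; ring
    have stepC : ∑ y, μ y * lam y * m y * (φ y - ∑ z, p y z * φ z)
        = μ x * lam x * m x * (1 - ∑ z, p x z * φ z) := by
      rw [Finset.sum_eq_single x]
      · rw [hφx]
      · intro y _ hyx
        by_cases hyB : y ∈ B
        · rw [hm.1 y hyB]; ring
        · rw [← hφharm y hyx hyB]; ring
      · intro h; exact absurd (Finset.mem_univ x) h
    rw [← stepA, stepB, stepC]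
  have hCapeq : 1 - ∑ z, p x z * φ z = Cap := by
    have : ∑ z, p x z * φ z = ∑ z, p x z - ∑ z, p x z * vB z := by
      rw [← Finset.sum_sub_distrib]
      apply Finset.sum_congr rfl; intro z _
      rw [hφv z]; ring
    rw [this, hrow]; ring
  rw [hCapeq] at keyS
  rw [keyS]
  field_simp
  ring
  field_simp [(hμ x).ne', (hlam x).ne']
end
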